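/- (Theorem 1, detector No-Click bullet.) Consider the parallel gate configuration with a single detector in path j (D = {j}), all other paths free (F = {1,…,N}∖{j}), and no phase shifters or beam splitters (S = ∅, B = ∅). Let z ∈ ℂ^N be a unit vector with ‖(1−P_j)z‖ > 0 and let p ∈ [z]. Let p̃ be the conditional measure p̃(A) = p(A ∩ {λ : q ≠ j}) / p({λ : q ≠ j}) (conditioning on 'No Click' in detector D_j). Then the output measure p̃K belongs to [(1−P_j)z / ‖(1−P_j)z‖]. -/

import Mathlib

/-!
Without beam splitters the gates act deterministically, so `pK` is the pushforward of `p` under a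
map `T`. Each component `pᵢ ∈ [z]_i` is concentrated on `q = i`, so conditioning on `q ≠ j` deletes
`p_j` and keeps the others: what remains is the mixture with the weights `|zᵢ|²`, `i ≠ j`, of
`(1 - P_j) z`, of total mass `‖(1 - P_j) z‖²`. For `q = i ≠ j` the detector resets `τ_j` to `0`
and halves every other strength, so `τ_i / 2` stays maximal and `Δ_τ' u'` is `Δ_τ u` with its
`j`-th entry deleted; hence `T` maps `Λ_z^i` into `Λ_{(1 - P_j) z}^i`. Normalising costs nothing,
as `Λ_z^i` only depends on the line through `z`.
-/

open MeasureTheory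
open scoped Classical

namespace SPI

/-! ## Ontology -/

/-- Ontic states: particle position `q`, field amplitudes `u`, field strengths `τ`. -/
abbrev Lam (N : ℕ) := Fin N × (Fin N → ℂ) × (Fin N → ℝ)

/-- The constraint region of `Λ`: `|u j| ≤ 1` and `τ j ∈ [0,1]`. -/
def onticSet (N : ℕ) : Set (Lam N) :=
  {l | (∀ j, ‖l.2.1 j‖ ≤ 1) ∧ ∀ j, l.2.2 j ∈ Set.Icc (0 : ℝ) 1}

/-- Highest field strength `τ_max`. -/
noncomputable def tmax {N : ℕ} (τ : Fin N → ℝ) : ℝ := ⨆ j, τ j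

/-- `Δ_τ u` : the amplitude vector with only maximal-strength entries retained. -/
noncomputable def deltaVec {N : ℕ} (τ : Fin N → ℝ) (u : Fin N → ℂ) : Fin N → ℂ :=
  fun j => if τ j = tmax τ then u j else 0

/-- Proportionality `z ∼ z'` of complex vectors (a nonzero multiple). -/
def Propto {N : ℕ} (v w : Fin N → ℂ) : Prop := ∃ α : ℂ, α ≠ 0 ∧ v = α • w

/-- The subset `Λ_z^i` of the ontic state space. -/
def lamSet {N : ℕ} (z : Fin N → ℂ) (i : Fin N) : Set (Lam N) :=
  {l | l.1 = i ∧ l.2.2 i = tmax l.2.2 ∧ 0 < tmax l.2.2 ∧ Propto (deltaVec l.2.2 l.2.1) z}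

/-- Membership in the auxiliary class `[z]_i`: a (Borel) probability measure giving
full measure to `Λ_z^i`. -/
def memClassI {N : ℕ} (z : Fin N → ℂ) (i : Fin N) (μ : Measure (Lam N)) : Prop :=
  IsProbabilityMeasure μ ∧ μ (lamSet z i) = 1

/-- Membership in the class `[z]` (for a unit vector `z`): mixtures `∑ |z i|² • pᵢ`
with `pᵢ ∈ [z]_i` (terms with `z i = 0` omitted). -/
def memClass {N : ℕ} (z : Fin N → ℂ) (μ : Measure (Lam N)) : Prop :=
  ∃ f : Fin N → Measure (Lam N),
    (∀ i, z i ≠ 0 → memClassI z i (f i)) ∧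
    μ = ∑ i, ENNReal.ofReal (‖z i‖ ^ 2) • f i

/-- The `j`-th standard basis vector of `ℂ^N`. -/
def eVec {N : ℕ} (j : Fin N) : Fin N → ℂ := fun m => if m = j then 1 else 0

/-! ## Parallel gate configurations -/

/-- A parallel gate configuration: a partition of the paths `{1,…,N}` into free paths `Fr`,
detector paths `De`, phase-shifter paths `Sh` (phases `ω`), and a collection `Bs` of pairwise
disjoint pairs (beam splitters with constants `R`, `T`, `R + T = 1`). -/
structure Config (N : ℕ) where
  Fr : Finset (Fin N)
  De : Finset (Fin N)
  Sh : Finset (Fin N)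
  ω : Fin N → ℝ
  Bs : Finset (Fin N × Fin N)
  R : Fin N × Fin N → ℝ
  T : Fin N × Fin N → ℝ
  hR : ∀ p ∈ Bs, 0 ≤ R p
  hT : ∀ p ∈ Bs, 0 ≤ T p
  hRT : ∀ p ∈ Bs, R p + T p = 1
  hst : ∀ p ∈ Bs, p.1 ≠ p.2
  hBB : ∀ p ∈ Bs, ∀ q ∈ Bs, p ≠ q → p.1 ≠ q.1 ∧ p.1 ≠ q.2 ∧ p.2 ≠ q.1 ∧ p.2 ≠ q.2
  hFD : Disjoint Fr De
  hFS : Disjoint Fr Sh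
  hDS : Disjoint De Sh
  hBdisj : ∀ p ∈ Bs, p.1 ∉ Fr ∧ p.2 ∉ Fr ∧ p.1 ∉ De ∧ p.2 ∉ De ∧ p.1 ∉ Sh ∧ p.2 ∉ Sh
  hcover : ∀ m : Fin N, m ∈ Fr ∨ m ∈ De ∨ m ∈ Sh ∨ ∃ p ∈ Bs, m = p.1 ∨ m = p.2

/-- Path `m` enters some beam splitter of the configuration. -/
def inB {N : ℕ} (c : Config N) (m : Fin N) : Prop := ∃ p ∈ c.Bs, m = p.1 ∨ m = p.2

/-- The new field strengths `τ'` produced by the parallel gates. -/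
noncomputable def newTau {N : ℕ} (c : Config N) (q : Fin N) (τ : Fin N → ℝ) : Fin N → ℝ :=
  fun m =>
    if m ∈ c.De then (if q = m then 1 else 0)
    else if hm : inB c m then max (τ hm.choose.1) (τ hm.choose.2) / 2
    else τ m / 2

/-- The new field amplitudes `u'` produced by the parallel gates. -/
noncomputable def newAmp {N : ℕ} (c : Config N) (q : Fin N) (u : Fin N → ℂ) (τ : Fin N → ℝ) :
    Fin N → ℂ :=
  fun m =>
    if m ∈ c.De then (if q = m then 1 else u m)
    else if m ∈ c.Sh then Complex.exp (Complex.I * (c.ω m : ℂ)) * u m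
    else if hm : inB c m then
      (let p := hm.choose
       let ts := max (τ p.1) (τ p.2)
       let us : ℂ := if τ p.1 = ts then u p.1 else 0
       let ut : ℂ := if τ p.2 = ts then u p.2 else 0
       if m = p.1 then
         Complex.I * (Real.sqrt (c.R p) : ℂ) * us + (Real.sqrt (c.T p) : ℂ) * ut
       else
         (Real.sqrt (c.T p) : ℂ) * us + Complex.I * (Real.sqrt (c.R p) : ℂ) * ut)
    else u m

/-- One step of the dynamics: the Markov kernel `K` of the parallel gate configuration,
as a measure-valued map on ontic states. -/
noncomputable def step {N : ℕ} (c : Config N) (l : Lam N) : Measure (Lam N) :=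
  let q := l.1
  let u' := newAmp c q l.2.1 l.2.2
  let τ' := newTau c q l.2.2
  if hq : inB c q then
    (let p := hq.choose
     let a := ‖u' p.1‖ ^ 2
     let b := ‖u' p.2‖ ^ 2
     if a + b = 0 then Measure.dirac (q, u', τ')
     else ENNReal.ofReal (a / (a + b)) • Measure.dirac (p.1, u', τ')
        + ENNReal.ofReal (b / (a + b)) • Measure.dirac (p.2, u', τ'))
  else Measure.dirac (q, u', τ')

/-- The output measure `pK` of the kernel applied to an input measure `p`. -/
noncomputable def out {N : ℕ} (c : Config N) (μ : Measure (Lam N)) : Measure (Lam N) :=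
  μ.bind (step c)

/-! ## Interferometric matrices -/

/-- The projector `P_j` onto component `j`. -/
def Pmat {N : ℕ} (j : Fin N) : Matrix (Fin N) (Fin N) ℂ :=
  Matrix.diagonal (fun a => if a = j then 1 else 0)

/-- The phase-shifter matrix `S_k(ω)`. -/
noncomputable def Smat {N : ℕ} (k : Fin N) (ω : ℝ) : Matrix (Fin N) (Fin N) ℂ :=
  Matrix.diagonal (fun a => if a = k then Complex.exp (Complex.I * (ω : ℂ)) else 1)

/-- The beam-splitter matrix `B_st(R,T)`: identity outside `{s,t}` and
`[[i√R, √T],[√T, i√R]]` on components `{s,t}`. -/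
noncomputable def Bmat {N : ℕ} (s t : Fin N) (R T : ℝ) : Matrix (Fin N) (Fin N) ℂ :=
  Matrix.of fun a b =>
    if a = s then
      (if b = s then Complex.I * (Real.sqrt R : ℂ) else if b = t then (Real.sqrt T : ℂ) else 0)
    else if a = t then
      (if b = s then (Real.sqrt T : ℂ) else if b = t then Complex.I * (Real.sqrt R : ℂ) else 0)
    else if a = b then 1 else 0

/-- The matrix `Δ_τ` selecting the components of maximal strength. -/
noncomputable def Dmat {N : ℕ} (τ : Fin N → ℝ) : Matrix (Fin N) (Fin N) ℂ :=
  Matrix.diagonal (fun j => if τ j = tmax τ then 1 else 0)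

/-- The matrix `Δ^(st)_τ` with `δ_{τ_s,max(τ_s,τ_t)}`, `δ_{τ_t,max(τ_s,τ_t)}` at `s`, `t`
and `1` elsewhere on the diagonal. -/
noncomputable def DmatST {N : ℕ} (τ : Fin N → ℝ) (s t : Fin N) : Matrix (Fin N) (Fin N) ℂ :=
  Matrix.diagonal (fun m =>
    if m = s then (if τ s = max (τ s) (τ t) then 1 else 0)
    else if m = t then (if τ t = max (τ s) (τ t) then 1 else 0)
    else 1)

/-! ## Commutation lemmas -/

lemma commute_diagonal {N : ℕ} (d e : Fin N → ℂ) :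
    Commute (Matrix.diagonal d) (Matrix.diagonal e) := by
  have h : (fun i => d i * e i) = fun i => e i * d i := funext fun i => mul_comm _ _
  show Matrix.diagonal d * Matrix.diagonal e = Matrix.diagonal e * Matrix.diagonal d
  rw [Matrix.diagonal_mul_diagonal, Matrix.diagonal_mul_diagonal, h]

lemma oneSubP_diagonal {N : ℕ} (j : Fin N) :
    (1 : Matrix (Fin N) (Fin N) ℂ) - Pmat j
      = Matrix.diagonal (fun a => 1 - if a = j then 1 else 0) := by
  rw [Pmat, ← Matrix.diagonal_one, Matrix.diagonal_sub]

lemma commute_oneSubP {N : ℕ} (j j' : Fin N) :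
    Commute ((1 : Matrix (Fin N) (Fin N) ℂ) - Pmat j) (1 - Pmat j') := by
  rw [oneSubP_diagonal, oneSubP_diagonal]; exact commute_diagonal _ _

/-- A matrix which differs from the identity only inside the block `{s,t} × {s,t}`. -/
def IsBlock {N : ℕ} (s t : Fin N) (M : Matrix (Fin N) (Fin N) ℂ) : Prop :=
  ∀ a b, ¬((a = s ∨ a = t) ∧ (b = s ∨ b = t)) →
    M a b = (1 : Matrix (Fin N) (Fin N) ℂ) a b

lemma commute_of_isBlock {N : ℕ} {s t s' t' : Fin N} {M M' : Matrix (Fin N) (Fin N) ℂ}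
    (hM : IsBlock s t M) (hM' : IsBlock s' t' M')
    (h1 : s ≠ s') (h2 : s ≠ t') (h3 : t ≠ s') (h4 : t ≠ t') : Commute M M' := by
  have hrow : ∀ a b : Fin N, a ≠ s → a ≠ t → (M - 1) a b = 0 := by
    intro a b ha hb
    have h := hM a b (by tauto)
    simp [Matrix.sub_apply, h]
  have hcol : ∀ a b : Fin N, b ≠ s → b ≠ t → (M - 1) a b = 0 := by
    intro a b hb1 hb2
    have h := hM a b (by tauto)
    simp [Matrix.sub_apply, h]
  have hrow' : ∀ a b : Fin N, a ≠ s' → a ≠ t' → (M' - 1) a b = 0 := by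
    intro a b ha hb
    have h := hM' a b (by tauto)
    simp [Matrix.sub_apply, h]
  have hcol' : ∀ a b : Fin N, b ≠ s' → b ≠ t' → (M' - 1) a b = 0 := by
    intro a b hb1 hb2
    have h := hM' a b (by tauto)
    simp [Matrix.sub_apply, h]
  have hEE' : (M - 1) * (M' - 1) = 0 := by
    ext a b
    rw [Matrix.mul_apply, Matrix.zero_apply]
    apply Finset.sum_eq_zero
    intro k _
    by_cases hk : k = s ∨ k = t
    · have : (M' - 1) k b = 0 := by
        rcases hk with h | h
        · subst h; exact hrow' _ _ h1 h2
        · subst h; exact hrow' _ _ h3 h4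
      rw [this, mul_zero]
    · push_neg at hk
      rw [hcol a k hk.1 hk.2, zero_mul]
  have hE'E : (M' - 1) * (M - 1) = 0 := by
    ext a b
    rw [Matrix.mul_apply, Matrix.zero_apply]
    apply Finset.sum_eq_zero
    intro k _
    by_cases hk : k = s' ∨ k = t'
    · have : (M - 1) k b = 0 := by
        rcases hk with h | h
        · subst h; exact hrow _ _ (Ne.symm h1) (Ne.symm h3)
        · subst h; exact hrow _ _ (Ne.symm h2) (Ne.symm h4)
      rw [this, mul_zero]
    · push_neg at hk
      rw [hcol' a k hk.1 hk.2, zero_mul]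
  have expand : ∀ A B : Matrix (Fin N) (Fin N) ℂ,
      A * B = (A - 1) * (B - 1) + A + B - 1 := by
    intro A B; noncomm_ring
  unfold Commute SemiconjBy
  rw [expand M M', expand M' M, hEE', hE'E]
  abel

lemma isBlock_Bmat {N : ℕ} (s t : Fin N) (R T : ℝ) : IsBlock s t (Bmat s t R T) := by
  intro a b hab
  by_cases has : a = s ∨ a = t
  · have hbs : ¬(b = s ∨ b = t) := fun h => hab ⟨has, h⟩
    push_neg at hbs
    have hb : a ≠ b := by
      rcases has with h | h <;> subst h
      · exact fun hc => hbs.1 hc.symm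
      · exact fun hc => hbs.2 hc.symm
    rw [Matrix.one_apply_ne hb]
    rcases has with h | h <;> subst h <;> simp [Bmat, hbs.1, hbs.2]
  · push_neg at has
    simp [Bmat, Matrix.one_apply, has.1, has.2]

lemma isBlock_one_sub_Pmat {N : ℕ} (j : Fin N) :
    IsBlock j j ((1 : Matrix (Fin N) (Fin N) ℂ) - Pmat j) := by
  intro a b hab
  have haj : a ≠ j ∨ b ≠ j := by tauto
  rw [oneSubP_diagonal]
  by_cases h : a = b
  · subst h
    have haj' : a ≠ j := by tauto
    simp [Matrix.diagonal_apply_eq, Matrix.one_apply_eq, haj']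
  · simp [Matrix.diagonal_apply_ne _ h, Matrix.one_apply_ne h]

lemma isBlock_Smat {N : ℕ} (k : Fin N) (ω : ℝ) : IsBlock k k (Smat k ω) := by
  intro a b hab
  have haj : a ≠ k ∨ b ≠ k := by tauto
  by_cases h : a = b
  · subst h
    have haj' : a ≠ k := by tauto
    simp [Smat, Matrix.diagonal_apply_eq, Matrix.one_apply_eq, haj']
  · simp [Smat, Matrix.diagonal_apply_ne _ h, Matrix.one_apply_ne h]

lemma isBlock_mul_diag {N : ℕ} (s t : Fin N) (M : Matrix (Fin N) (Fin N) ℂ)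
    (hM : IsBlock s t M) (d : Fin N → ℂ) (hd : ∀ m, m ≠ s → m ≠ t → d m = 1) :
    IsBlock s t (M * Matrix.diagonal d) := by
  intro a b hab
  rw [Matrix.mul_diagonal, hM a b hab]
  by_cases h : a = b
  · subst h
    have h1 : a ≠ s := fun hc => hab ⟨Or.inl hc, Or.inl hc⟩
    have h2 : a ≠ t := fun hc => hab ⟨Or.inr hc, Or.inr hc⟩
    rw [Matrix.one_apply_eq, hd a h1 h2, mul_one]
  · rw [Matrix.one_apply_ne h, zero_mul]

lemma isBlock_BmatD {N : ℕ} (s t : Fin N) (R T : ℝ) (τ : Fin N → ℝ) :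
    IsBlock s t (Bmat s t R T * DmatST τ s t) := by
  unfold DmatST
  refine isBlock_mul_diag s t _ (isBlock_Bmat s t R T) _ ?_
  intro m h1 h2
  simp [h1, h2]

/-! ## The matrix `W` of the configuration -/

noncomputable def Dprod {N : ℕ} (c : Config N) : Matrix (Fin N) (Fin N) ℂ :=
  c.De.noncommProd (fun j => 1 - Pmat j) (fun _ _ _ _ _ => commute_oneSubP _ _)

noncomputable def Sprod {N : ℕ} (c : Config N) : Matrix (Fin N) (Fin N) ℂ :=
  c.Sh.noncommProd (fun k => Smat k (c.ω k)) (fun _ _ _ _ _ => commute_diagonal _ _)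

noncomputable def Bprod {N : ℕ} (c : Config N) : Matrix (Fin N) (Fin N) ℂ :=
  c.Bs.noncommProd (fun p => Bmat p.1 p.2 (c.R p) (c.T p))
    (fun p hp q hq hpq => by
      obtain ⟨h1, h2, h3, h4⟩ := c.hBB p hp q hq hpq
      exact commute_of_isBlock (isBlock_Bmat _ _ _ _) (isBlock_Bmat _ _ _ _) h1 h2 h3 h4)

/-- The matrix `W = ∏_{j∈D}(1−P_j) ∏_{k∈S} S_k(ω_k) ∏_{{s,t}∈B} B_st(R_st,T_st)`. -/
noncomputable def Wmat {N : ℕ} (c : Config N) : Matrix (Fin N) (Fin N) ℂ :=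
  Dprod c * Sprod c * Bprod c

/-- The vector `W z`. -/
noncomputable def Wvec {N : ℕ} (c : Config N) (z : Fin N → ℂ) : Fin N → ℂ :=
  (Wmat c).mulVec z

/-- The product `∏_{{s,t}∈B} (B_st(R_st,T_st) Δ^(st)_τ)`. -/
noncomputable def BDprod {N : ℕ} (c : Config N) (τ : Fin N → ℝ) : Matrix (Fin N) (Fin N) ℂ :=
  c.Bs.noncommProd (fun p => Bmat p.1 p.2 (c.R p) (c.T p) * DmatST τ p.1 p.2)
    (fun p hp q hq hpq => by
      obtain ⟨h1, h2, h3, h4⟩ := c.hBB p hp q hq hpq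
      exact commute_of_isBlock (isBlock_BmatD _ _ _ _ _) (isBlock_BmatD _ _ _ _ _) h1 h2 h3 h4)

lemma le_tmax {N : ℕ} (τ : Fin N → ℝ) (m : Fin N) : τ m ≤ tmax τ :=
  le_ciSup (Set.finite_range τ).bddAbove m

lemma tmax_eq_of_forall_le {N : ℕ} {τ : Fin N → ℝ} {i : Fin N} (h : ∀ m, τ m ≤ τ i) :
    tmax τ = τ i :=
  haveI : Nonempty (Fin N) := ⟨i⟩
  le_antisymm (ciSup_le h) (le_tmax τ i)

lemma propto_smul_right_iff {N : ℕ} {v w : Fin N → ℂ} {a : ℂ} (ha : a ≠ 0) :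
    Propto v (a • w) ↔ Propto v w := by
  constructor
  · rintro ⟨α, hα, rfl⟩
    exact ⟨α * a, mul_ne_zero hα ha, smul_smul α a w⟩
  · rintro ⟨α, hα, rfl⟩
    refine ⟨α * a⁻¹, mul_ne_zero hα (inv_ne_zero ha), ?_⟩
    rw [smul_smul, mul_assoc, inv_mul_cancel₀ ha, mul_one]

lemma lamSet_smul {N : ℕ} (z : Fin N → ℂ) {a : ℂ} (ha : a ≠ 0) (i : Fin N) :
    lamSet (a • z) i = lamSet z i := by
  ext l
  simp only [lamSet, propto_smul_right_iff ha]

lemma one_sub_Pmat_mulVec {N : ℕ} (j : Fin N) (z : Fin N → ℂ) :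
    (1 - Pmat j).mulVec z = ({j}ᶜ : Set (Fin N)).indicator z := by
  ext m
  by_cases h : m = j <;> simp [oneSubP_diagonal, Matrix.mulVec_diagonal, h]

section Mixture

variable {N : ℕ}

noncomputable def mixture (z : Fin N → ℂ) (f : Fin N → Measure (Lam N)) : Measure (Lam N) :=
  ∑ i, ENNReal.ofReal (‖z i‖ ^ 2) • f i

lemma memClassI.ae_fst_eq {z : Fin N → ℂ} {i : Fin N} {μ : Measure (Lam N)}
    (h : memClassI z i μ) : ∀ᵐ l ∂μ, l.1 = i := by
  have := h.1
  have hmeas : MeasurableSet {l : Lam N | l.1 = i} := measurable_fst (measurableSet_singleton i)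
  rw [ae_iff_measure_eq hmeas.nullMeasurableSet, measure_univ]
  exact le_antisymm prob_le_one (h.2 ▸ measure_mono fun l hl => hl.1)

lemma memClassI.restrict_fst_preimage {z : Fin N → ℂ} {i : Fin N} {μ : Measure (Lam N)}
    (h : memClassI z i μ) (A : Set (Fin N)) :
    μ.restrict (Prod.fst ⁻¹' A) = if i ∈ A then μ else 0 := by
  split_ifs with hi
  · exact Measure.restrict_eq_self_of_ae_mem
      (h.ae_fst_eq.mono fun l hl => show l.1 ∈ A from hl ▸ hi)
  · exact Measure.restrict_eq_zero.2
      (measure_eq_zero_iff_ae_notMem.2 (h.ae_fst_eq.mono fun l hl => show l.1 ∉ A from hl ▸ hi))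

lemma mixture_restrict_fst_preimage {z : Fin N → ℂ} {f : Fin N → Measure (Lam N)}
    (hf : ∀ i, z i ≠ 0 → memClassI z i (f i)) (A : Set (Fin N)) :
    (mixture z f).restrict (Prod.fst ⁻¹' A) = mixture (A.indicator z) f := by
  rw [mixture, mixture, ← Measure.restrictₗ_apply, map_sum]
  refine Finset.sum_congr rfl fun i _ => ?_
  rw [LinearMap.map_smul, Measure.restrictₗ_apply]
  by_cases hzi : z i = 0
  · simp [hzi, Set.indicator_apply]
  · rw [(hf i hzi).restrict_fst_preimage A]
    by_cases hi : i ∈ A <;> simp [hi]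

lemma mixture_apply_univ {z : Fin N → ℂ} {f : Fin N → Measure (Lam N)}
    (hf : ∀ i, z i ≠ 0 → IsProbabilityMeasure (f i)) :
    mixture z f Set.univ = ENNReal.ofReal (∑ i, ‖z i‖ ^ 2) := by
  rw [mixture, Measure.finsetSum_apply, ENNReal.ofReal_sum_of_nonneg fun i _ => sq_nonneg _]
  refine Finset.sum_congr rfl fun i _ => ?_
  by_cases hzi : z i = 0
  · simp [hzi]
  · have := hf i hzi
    simp

lemma mixture_map {z : Fin N → ℂ} {f : Fin N → Measure (Lam N)} {T : Lam N → Lam N}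
    (hT : Measurable T) : (mixture z f).map T = mixture z fun i => (f i).map T := by
  simp only [mixture, ← Measure.mapₗ_apply_of_measurable hT, map_sum, LinearMap.map_smul]

lemma memClassI.map {z z' : Fin N → ℂ} {i : Fin N} {μ : Measure (Lam N)} {T : Lam N → Lam N}
    (h : memClassI z i μ) (hT : Measurable T) (hmaps : Set.MapsTo T (lamSet z i) (lamSet z' i)) :
    memClassI z' i (μ.map T) := by
  have := h.1
  refine ⟨Measure.isProbabilityMeasure_map hT.aemeasurable, le_antisymm prob_le_one ?_⟩
  calc (1 : ENNReal) = μ (lamSet z i) := h.2.symm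
    _ ≤ μ (T ⁻¹' lamSet z' i) := measure_mono hmaps
    _ ≤ μ.map T (lamSet z' i) := Measure.le_map_apply hT.aemeasurable _

lemma memClassI_smul_iff {z : Fin N → ℂ} {a : ℂ} (ha : a ≠ 0) {i : Fin N} {μ : Measure (Lam N)} :
    memClassI (a • z) i μ ↔ memClassI z i μ := by
  rw [memClassI, memClassI, lamSet_smul z ha]

lemma memClass_normalize {w : Fin N → ℂ} {f : Fin N → Measure (Lam N)}
    (hf : ∀ i, w i ≠ 0 → memClassI w i (f i)) (hs : 0 < ∑ i, ‖w i‖ ^ 2) :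
    memClass (fun m => w m / ((Real.sqrt (∑ i, ‖w i‖ ^ 2) : ℝ) : ℂ))
      ((ENNReal.ofReal (∑ i, ‖w i‖ ^ 2))⁻¹ • mixture w f) := by
  set s := ∑ i, ‖w i‖ ^ 2
  have hsc : ((Real.sqrt s : ℝ) : ℂ)⁻¹ ≠ 0 := by
    exact_mod_cast inv_ne_zero (Real.sqrt_pos.2 hs).ne'
  have hw' : (fun m => w m / ((Real.sqrt s : ℝ) : ℂ)) = ((Real.sqrt s : ℝ) : ℂ)⁻¹ • w := by
    ext m; simp [div_eq_inv_mul]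
  refine ⟨f, fun i hi => ?_, ?_⟩
  · rw [hw'] at hi ⊢
    exact (memClassI_smul_iff hsc).2 (hf i fun h => hi (by simp [h]))
  · rw [mixture, Finset.smul_sum]
    refine Finset.sum_congr rfl fun i _ => ?_
    have hnorm : ‖w i / ((Real.sqrt s : ℝ) : ℂ)‖ ^ 2 = ‖w i‖ ^ 2 / s := by
      rw [norm_div, Complex.norm_real, Real.norm_of_nonneg (Real.sqrt_nonneg s), div_pow,
        Real.sq_sqrt hs.le]
    rw [smul_smul, hnorm, ENNReal.ofReal_div_of_pos hs, div_eq_mul_inv, mul_comm]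

end Mixture

section NoBeamSplitter

variable {N : ℕ} {c : Config N}

noncomputable def gateMap (c : Config N) (l : Lam N) : Lam N :=
  (l.1, newAmp c l.1 l.2.1 l.2.2, newTau c l.1 l.2.2)

lemma not_inB_of_Bs_eq_empty (hBs : c.Bs = ∅) (m : Fin N) : ¬ inB c m := by
  rintro ⟨p, hp, -⟩
  simp [hBs] at hp

lemma newTau_of_Bs_eq_empty (hBs : c.Bs = ∅) (q : Fin N) (τ : Fin N → ℝ) (m : Fin N) :
    newTau c q τ m = if m ∈ c.De then (if q = m then 1 else 0) else τ m / 2 := by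
  simp [newTau, not_inB_of_Bs_eq_empty hBs m]

lemma newAmp_of_Bs_eq_empty (hBs : c.Bs = ∅) (q : Fin N) (u : Fin N → ℂ) (τ : Fin N → ℝ)
    (m : Fin N) :
    newAmp c q u τ m = if m ∈ c.De then (if q = m then 1 else u m)
      else if m ∈ c.Sh then Complex.exp (Complex.I * (c.ω m : ℂ)) * u m else u m := by
  simp [newAmp, not_inB_of_Bs_eq_empty hBs m]

lemma measurable_gateMap (hBs : c.Bs = ∅) : Measurable (gateMap c) := by
  refine measurable_fst.prodMk (Measurable.prodMk ?_ ?_)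
  · refine measurable_pi_lambda _ fun m => ?_
    simp only [newAmp_of_Bs_eq_empty hBs]
    split_ifs
    · exact Measurable.ite (measurable_fst (measurableSet_singleton m)) measurable_const
        (by fun_prop)
    all_goals fun_prop
  · refine measurable_pi_lambda _ fun m => ?_
    simp only [newTau_of_Bs_eq_empty hBs]
    split_ifs
    · exact Measurable.ite (measurable_fst (measurableSet_singleton m)) measurable_const
        measurable_const
    · fun_prop

lemma out_eq_map_gateMap (hBs : c.Bs = ∅) (μ : Measure (Lam N)) :
    out c μ = μ.map (gateMap c) := by
  have hstep : step c = fun l => Measure.dirac (gateMap c l) :=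
    funext fun l => dif_neg (not_inB_of_Bs_eq_empty hBs l.1)
  rw [out, hstep, Measure.bind_dirac_eq_map μ (measurable_gateMap hBs)]

lemma gateMap_mapsTo_lamSet (hSh : c.Sh = ∅) (hBs : c.Bs = ∅) (z : Fin N → ℂ) {i : Fin N}
    (hi : i ∉ c.De) :
    Set.MapsTo (gateMap c) (lamSet z i) (lamSet ((↑c.De : Set (Fin N))ᶜ.indicator z) i) := by
  rintro ⟨q, u, τ⟩ ⟨rfl, hτq, hpos, α, hα, hu⟩
  dsimp only at hτq hpos hu
  rw [← hτq] at hpos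
  have hτ' : ∀ m, newTau c q τ m = if m ∈ c.De then 0 else τ m / 2 := by
    intro m
    rw [newTau_of_Bs_eq_empty hBs]
    split_ifs with hm hqm <;> first | rfl | exact absurd (hqm ▸ hm) hi
  have hu' : ∀ m, m ∉ c.De → newAmp c q u τ m = u m := by
    intro m hm
    simp [newAmp_of_Bs_eq_empty hBs, hm, hSh]
  have hmax : tmax (newTau c q τ) = τ q / 2 := by
    rw [tmax_eq_of_forall_le, hτ', if_neg hi]
    intro m
    rw [hτ', hτ', if_neg hi]
    split_ifs
    · positivity
    · linarith [le_tmax τ m]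
  refine ⟨rfl, ?_, ?_, α, hα, ?_⟩
  · simp only [gateMap, hmax, hτ', if_neg hi]
  · simp only [gateMap, hmax]
    positivity
  · ext m
    have hum := congrFun hu m
    simp only [gateMap, deltaVec, hmax, hτ', Pi.smul_apply, Set.indicator_apply] at hum ⊢
    by_cases hm : m ∈ c.De
    · simp [hm, (half_pos hpos).ne]
    · simpa [hm, hu' m hm, ← hτq] using hum

end NoBeamSplitter

theorem thm1_detector_noclick_general {N : ℕ} (c : Config N) (j : Fin N)
    (hDe : c.De = {j}) (hSh : c.Sh = ∅) (hBs : c.Bs = ∅)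
    (z : Fin N → ℂ)
    (hnz : 0 < Real.sqrt (∑ i, ‖((1 - Pmat j).mulVec z) i‖ ^ 2))
    (p : Measure (Lam N)) (hp : memClass z p) :
    memClass
      (fun m => ((1 - Pmat j).mulVec z) m /
        ((Real.sqrt (∑ i, ‖((1 - Pmat j).mulVec z) i‖ ^ 2) : ℝ) : ℂ))
      (out c ((p {l : Lam N | l.1 ≠ j})⁻¹ • p.restrict {l : Lam N | l.1 ≠ j})) := by
  obtain ⟨f, hf, hp⟩ := hp
  rw [show p = mixture z f from hp]
  set w := (1 - Pmat j).mulVec z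
  have hw : w = ({j}ᶜ : Set (Fin N)).indicator z := one_sub_Pmat_mulVec j z
  have hw_ne : ∀ i, w i ≠ 0 → i ≠ j ∧ z i ≠ 0 := by
    intro i hi
    by_cases hij : i = j <;> simp_all
  have hrestrict : (mixture z f).restrict {l : Lam N | l.1 ≠ j} = mixture w f := by
    rw [hw]
    exact mixture_restrict_fst_preimage hf {j}ᶜ
  have hmass : mixture z f {l : Lam N | l.1 ≠ j} = ENNReal.ofReal (∑ i, ‖w i‖ ^ 2) := by
    rw [← Measure.restrict_apply_univ, hrestrict]
    exact mixture_apply_univ fun i hi => (hf i (hw_ne i hi).2).1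
  have hclass : ∀ i, w i ≠ 0 → memClassI w i ((f i).map (gateMap c)) := by
    intro i hi
    obtain ⟨hij, hzi⟩ := hw_ne i hi
    refine (hf i hzi).map (measurable_gateMap hBs) ?_
    simpa [hw, hDe] using gateMap_mapsTo_lamSet hSh hBs z (i := i) (by simpa [hDe] using hij)
  rw [hrestrict, hmass, out_eq_map_gateMap hBs, Measure.map_smul,
    mixture_map (measurable_gateMap hBs)]
  exact memClass_normalize hclass (Real.sqrt_pos.1 hnz)

/-- Theorem 1, detector No-Click bullet. A single detector `D_j`
(all other paths free), conditioned on 'No Click', maps `[z]` into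
`[(1−P_j)z / ‖(1−P_j)z‖]`. -/
theorem thm1_detector_noclick {N : ℕ} (c : Config N) (j : Fin N)
    (hDe : c.De = {j}) (hSh : c.Sh = ∅) (hBs : c.Bs = ∅)
    (hFr : c.Fr = Finset.univ \ {j}) (z : Fin N → ℂ)
    (hz : ∑ i, ‖z i‖ ^ 2 = 1)
    (hnz : 0 < Real.sqrt (∑ i, ‖((1 - Pmat j).mulVec z) i‖ ^ 2))
    (p : Measure (Lam N)) (hp : memClass z p) :
    memClass
      (fun m => ((1 - Pmat j).mulVec z) m /
        ((Real.sqrt (∑ i, ‖((1 - Pmat j).mulVec z) i‖ ^ 2) : ℝ) : ℂ))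
      (out c ((p {l : Lam N | l.1 ≠ j})⁻¹ • p.restrict {l : Lam N | l.1 ≠ j})) :=
  thm1_detector_noclick_general c j hDe hSh hBs z hnz p hp

end SPI
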